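/- Define A₋ = D_{p,q} and A₊ = η_p + x η_{p^{-1}} p^{N} - (p-q) x D_{p,q} acting on the basis ψ_n(x;p,q), where η_s f(x) = f(sx) and p^N ψ_n = p^n ψ_n. Then A₊ A₋ ψ_n = [n]_{p,q} ψ_n and A₋ A₊ ψ_n = [n+1]_{p,q} ψ_n, hence A₋ A₊ - q A₊ A₋ acts as p^n on ψ_n (the (p,q)-oscillator relation). -/

import Mathlib

/-!
The Rogers-Szegő polynomial `H_n` has the (p,q)-binomials as coefficients. The absorption
identity `[n+1 choose k+1]·[k+1] = [n+1]·[n choose k]` gives `D_{p,q} H_n = [n] H_{n-1}`.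
Away from `x = 0` the `D_{p,q}` term of `A₊` cancels its `η_p` term, leaving
`f(qx) + p^m x f(p⁻¹x)`, and the (p,q)-Pascal rule turns this into `A₊ H_n = H_{n+1}`.
Since `[n]! = [n-1]!·[n]`, normalising gives `A₋ψ_n = √[n] ψ_{n-1}` and
`A₊ψ_n = √[n+1] ψ_{n+1}`, so `A₊A₋` and `A₋A₊` act by `[n]` and `[n+1]`, and
`[n+1] - q[n] = p^n`.
-/

/-- The (p,q)-number `[n]_{p,q} = (p^n - q^n)/(p-q)`. -/
noncomputable def pqNum (p q : ℝ) (n : ℕ) : ℝ := (p ^ n - q ^ n) / (p - q)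

/-- The (p,q)-factorial `[n]_{p,q}!`. -/
noncomputable def pqFac (p q : ℝ) (n : ℕ) : ℝ := ∏ j ∈ Finset.range n, pqNum p q (j + 1)

/-- The (p,q)-binomial coefficient. -/
noncomputable def pqBinom (p q : ℝ) (n k : ℕ) : ℝ :=
  pqFac p q n / (pqFac p q k * pqFac p q (n - k))

/-- The (p,q)-Rogers-Szegő polynomial `H_n(x;p,q)`. -/
noncomputable def pqRogersSzego (p q : ℝ) (n : ℕ) (x : ℝ) : ℝ :=
  ∑ k ∈ Finset.range (n + 1), pqBinom p q n k * x ^ k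

/-- The normalized (p,q)-Rogers-Szegő polynomial `ψ_n(x;p,q)`. -/
noncomputable def psiPQ (p q : ℝ) (n : ℕ) (x : ℝ) : ℝ :=
  pqRogersSzego p q n x / Real.sqrt (pqFac p q n)

/-- The (p,q)-difference operator; the annihilation operator `A₋`. -/
noncomputable def Dpq (p q : ℝ) (f : ℝ → ℝ) (x : ℝ) : ℝ :=
  (f (p * x) - f (q * x)) / ((p - q) * x)

/-- The creation operator `A₊ = η_p + x η_{p⁻¹} p^N - (p-q) x D_{p,q}` acting on a
`p^N`-eigenfunction with eigenvalue `p^m` (scaling operator `η_s f(x) = f(sx)`). -/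
noncomputable def Aplus (p q : ℝ) (m : ℕ) (f : ℝ → ℝ) (x : ℝ) : ℝ :=
  f (p * x) + x * p ^ m * f (p⁻¹ * x) - (p - q) * x * Dpq p q f x

section Operators

variable {p q : ℝ}

theorem Dpq_congr {f g : ℝ → ℝ} (hp : p ≠ 0) (hq : q ≠ 0) (h : ∀ y ≠ 0, f y = g y)
    {x : ℝ} (hx : x ≠ 0) : Dpq p q f x = Dpq p q g x := by
  rw [Dpq, Dpq, h _ (mul_ne_zero hp hx), h _ (mul_ne_zero hq hx)]

theorem Aplus_congr {f g : ℝ → ℝ} (m : ℕ) (hp : p ≠ 0) (hq : q ≠ 0)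
    (h : ∀ y ≠ 0, f y = g y) {x : ℝ} (hx : x ≠ 0) : Aplus p q m f x = Aplus p q m g x := by
  rw [Aplus, Aplus, Dpq_congr hp hq h hx, h _ (mul_ne_zero hp hx),
    h _ (mul_ne_zero (inv_ne_zero hp) hx)]

theorem Dpq_const_mul (c : ℝ) (f : ℝ → ℝ) (x : ℝ) :
    Dpq p q (fun y => c * f y) x = c * Dpq p q f x := by
  simp only [Dpq]
  ring

theorem Aplus_const_mul (m : ℕ) (c : ℝ) (f : ℝ → ℝ) (x : ℝ) :
    Aplus p q m (fun y => c * f y) x = c * Aplus p q m f x := by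
  simp only [Aplus, Dpq_const_mul]
  ring

theorem Dpq_finset_sum {ι : Type*} (s : Finset ι) (f : ι → ℝ → ℝ) (x : ℝ) :
    Dpq p q (fun y => ∑ i ∈ s, f i y) x = ∑ i ∈ s, Dpq p q (f i) x := by
  simp only [Dpq, ← Finset.sum_sub_distrib, Finset.sum_div]

theorem Dpq_pow (k : ℕ) {x : ℝ} (hx : x ≠ 0) :
    Dpq p q (fun y => y ^ k) x = pqNum p q k * x ^ (k - 1) := by
  rcases k with _ | k
  · simp [Dpq, pqNum]
  · rw [Dpq, pqNum, mul_pow, mul_pow, ← sub_mul, Nat.add_sub_cancel, pow_succ x,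
      ← mul_assoc, mul_div_mul_right _ _ hx, div_mul_eq_mul_div]

theorem Aplus_eq (hpq : p ≠ q) (m : ℕ) (f : ℝ → ℝ) {x : ℝ} (hx : x ≠ 0) :
    Aplus p q m f x = f (q * x) + x * p ^ m * f (p⁻¹ * x) := by
  rw [Aplus, Dpq, mul_div_cancel₀ _ (mul_ne_zero (sub_ne_zero.2 hpq) hx)]
  ring

end Operators

section Numbers

variable {p q : ℝ}

@[simp]
theorem pqNum_zero : pqNum p q 0 = 0 := by
  simp [pqNum]

theorem pqNum_one (hpq : p ≠ q) : pqNum p q 1 = 1 := by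
  simp [pqNum, sub_ne_zero.2 hpq]

theorem pqNum_add (a b : ℕ) : pqNum p q (a + b) = q ^ a * pqNum p q b + p ^ b * pqNum p q a := by
  rw [pqNum, pqNum, pqNum, mul_div_assoc', mul_div_assoc', ← add_div]
  ring

theorem pqNum_succ_sub_mul (hpq : p ≠ q) (n : ℕ) :
    pqNum p q (n + 1) - q * pqNum p q n = p ^ n := by
  rw [add_comm, pqNum_add, pqNum_one hpq, pow_one]
  ring

theorem pqNum_succ_pos (hq : 0 < q) (hqp : q < p) (n : ℕ) : 0 < pqNum p q (n + 1) :=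
  div_pos (sub_pos.2 (pow_lt_pow_left₀ hqp hq.le n.succ_ne_zero)) (sub_pos.2 hqp)

@[simp]
theorem pqFac_zero : pqFac p q 0 = 1 :=
  Finset.prod_range_zero _

theorem pqFac_succ (n : ℕ) : pqFac p q (n + 1) = pqFac p q n * pqNum p q (n + 1) :=
  Finset.prod_range_succ _ _

theorem pqFac_pos (hq : 0 < q) (hqp : q < p) (n : ℕ) : 0 < pqFac p q n :=
  Finset.prod_pos fun j _ => pqNum_succ_pos hq hqp j

variable (hq : 0 < q) (hqp : q < p)
include hq hqp

theorem pqBinom_zero_right (n : ℕ) : pqBinom p q n 0 = 1 := by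
  simp [pqBinom, (pqFac_pos hq hqp n).ne']

theorem pqBinom_self (n : ℕ) : pqBinom p q n n = 1 := by
  simp [pqBinom, (pqFac_pos hq hqp n).ne']

theorem pqBinom_succ_mul_pqNum {n k : ℕ} (hk : k ≤ n) :
    pqBinom p q (n + 1) (k + 1) * pqNum p q (k + 1) = pqNum p q (n + 1) * pqBinom p q n k := by
  obtain ⟨e, rfl⟩ := Nat.exists_eq_add_of_le hk
  have hsub : k + e + 1 - (k + 1) = e := by omega
  simp only [pqBinom, hsub, Nat.add_sub_cancel_left, pqFac_succ]
  have := (pqFac_pos hq hqp k).ne'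
  have := (pqFac_pos hq hqp e).ne'
  have := (pqNum_succ_pos hq hqp k).ne'
  field_simp

theorem pqBinom_succ_succ {n k : ℕ} (hk : k < n) :
    pqBinom p q (n + 1) (k + 1) =
      q ^ (k + 1) * pqBinom p q n (k + 1) + p ^ (n - k) * pqBinom p q n k := by
  obtain ⟨e, rfl⟩ := Nat.exists_eq_add_of_lt hk
  have h₁ : k + e + 1 + 1 - (k + 1) = e + 1 := by omega
  have h₂ : k + e + 1 - (k + 1) = e := by omega
  have h₃ : k + e + 1 - k = e + 1 := by omega
  have hnum : pqNum p q (k + e + 1 + 1) =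
      q ^ (k + 1) * pqNum p q (e + 1) + p ^ (e + 1) * pqNum p q (k + 1) := by
    rw [← pqNum_add]; ring_nf
  simp only [pqBinom, h₁, h₂, h₃, pqFac_succ, hnum]
  have := (pqFac_pos hq hqp k).ne'
  have := (pqFac_pos hq hqp e).ne'
  have := (pqFac_pos hq hqp (k + e + 1)).ne'
  have := (pqNum_succ_pos hq hqp k).ne'
  have := (pqNum_succ_pos hq hqp e).ne'
  field_simp

end Numbers

section RogersSzego

variable {p q : ℝ} (hq : 0 < q) (hqp : q < p)
include hq hqp

theorem Dpq_pqRogersSzego (n : ℕ) {x : ℝ} (hx : x ≠ 0) :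
    Dpq p q (pqRogersSzego p q n) x = pqNum p q n * pqRogersSzego p q (n - 1) x := by
  rcases n with _ | m
  · simp [pqRogersSzego, Dpq]
  have hterm (k : ℕ) : Dpq p q (fun y => pqBinom p q (m + 1) k * y ^ k) x =
      pqBinom p q (m + 1) k * pqNum p q k * x ^ (k - 1) := by
    rw [Dpq_const_mul, Dpq_pow k hx, mul_assoc]
  change Dpq p q (fun y => ∑ k ∈ Finset.range (m + 2), pqBinom p q (m + 1) k * y ^ k) x = _
  rw [Dpq_finset_sum, Finset.sum_congr rfl fun k _ => hterm k, Finset.sum_range_succ',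
    pqRogersSzego, Finset.mul_sum]
  simp only [pqNum_zero, mul_zero, zero_mul, add_zero, Nat.add_sub_cancel]
  refine Finset.sum_congr rfl fun k hk => ?_
  rw [pqBinom_succ_mul_pqNum hq hqp (Nat.lt_succ_iff.mp (Finset.mem_range.mp hk)), mul_assoc]

theorem pqRogersSzego_succ (n : ℕ) (x : ℝ) :
    pqRogersSzego p q (n + 1) x =
      pqRogersSzego p q n (q * x) + x * p ^ n * pqRogersSzego p q n (p⁻¹ * x) := by
  have hp : p ≠ 0 := (hq.trans hqp).ne'
  have hscale (k : ℕ) (hk : k ≤ n) :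
      x * p ^ n * (pqBinom p q n k * (p⁻¹ * x) ^ k) = p ^ (n - k) * pqBinom p q n k * x ^ (k + 1) := by
    rw [mul_pow, inv_pow, pow_sub₀ p hp hk, pow_succ]
    ring
  have hpascal (k : ℕ) (hk : k < n) :
      pqBinom p q n (k + 1) * (q * x) ^ (k + 1) + p ^ (n - k) * pqBinom p q n k * x ^ (k + 1) =
        pqBinom p q (n + 1) (k + 1) * x ^ (k + 1) := by
    rw [pqBinom_succ_succ hq hqp hk, mul_pow]
    ring
  simp only [pqRogersSzego]
  rw [Finset.sum_range_succ', Finset.sum_range_succ, Finset.sum_range_succ' _ n, Finset.mul_sum,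
    Finset.sum_range_succ _ n, hscale n le_rfl,
    Finset.sum_congr rfl fun k hk => hscale k (Finset.mem_range.mp hk).le,
    ← Finset.sum_congr rfl fun k hk => hpascal k (Finset.mem_range.mp hk), Finset.sum_add_distrib]
  simp only [pqBinom_zero_right hq hqp, pqBinom_self hq hqp, Nat.sub_self]
  ring

end RogersSzego

section Oscillator

variable {p q : ℝ}

theorem psiPQ_eq_inv_mul (n : ℕ) :
    psiPQ p q n = fun y => (√(pqFac p q n))⁻¹ * pqRogersSzego p q n y :=
  funext fun _ => div_eq_inv_mul _ _

variable (hq : 0 < q) (hqp : q < p)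
include hq hqp

theorem Aplus_pqRogersSzego (n : ℕ) {x : ℝ} (hx : x ≠ 0) :
    Aplus p q n (pqRogersSzego p q n) x = pqRogersSzego p q (n + 1) x := by
  rw [Aplus_eq hqp.ne' n _ hx, pqRogersSzego_succ hq hqp]

theorem sqrt_pqFac_succ (n : ℕ) :
    √(pqFac p q (n + 1)) = √(pqFac p q n) * √(pqNum p q (n + 1)) := by
  rw [pqFac_succ, Real.sqrt_mul (pqFac_pos hq hqp n).le]

theorem Dpq_psiPQ (n : ℕ) {x : ℝ} (hx : x ≠ 0) :
    Dpq p q (psiPQ p q n) x = √(pqNum p q n) * psiPQ p q (n - 1) x := by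
  rw [psiPQ_eq_inv_mul, Dpq_const_mul, Dpq_pqRogersSzego hq hqp n hx]
  rcases n with _ | m
  · simp
  rw [Nat.add_sub_cancel, psiPQ, sqrt_pqFac_succ hq hqp]
  have := (Real.sqrt_pos.2 (pqFac_pos hq hqp m)).ne'
  have := (Real.sqrt_pos.2 (pqNum_succ_pos hq hqp m)).ne'
  field_simp
  rw [Real.sq_sqrt (pqNum_succ_pos hq hqp m).le]

theorem Aplus_psiPQ (n : ℕ) {x : ℝ} (hx : x ≠ 0) :
    Aplus p q n (psiPQ p q n) x = √(pqNum p q (n + 1)) * psiPQ p q (n + 1) x := by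
  rw [psiPQ_eq_inv_mul, Aplus_const_mul, Aplus_pqRogersSzego hq hqp n hx, psiPQ,
    sqrt_pqFac_succ hq hqp]
  have := (Real.sqrt_pos.2 (pqFac_pos hq hqp n)).ne'
  have := (Real.sqrt_pos.2 (pqNum_succ_pos hq hqp n)).ne'
  field_simp

end Oscillator

/-- `A₋ψ_n` is a multiple of `ψ_{n-1}`, on which `p^N` acts as `p^{n-1}`. -/
theorem pq_oscillator_relations (p q : ℝ) (hq0 : 0 < q) (hqp : q < p) (n : ℕ)
    (x : ℝ) (hx : x ≠ 0) :
    Aplus p q (n - 1) (Dpq p q (psiPQ p q n)) x = pqNum p q n * psiPQ p q n x ∧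
      Dpq p q (Aplus p q n (psiPQ p q n)) x = pqNum p q (n + 1) * psiPQ p q n x ∧
      Dpq p q (Aplus p q n (psiPQ p q n)) x
          - q * Aplus p q (n - 1) (Dpq p q (psiPQ p q n)) x = p ^ n * psiPQ p q n x := by
  have hp : p ≠ 0 := (hq0.trans hqp).ne'
  have hAplusDpq : Aplus p q (n - 1) (Dpq p q (psiPQ p q n)) x = pqNum p q n * psiPQ p q n x := by
    rw [Aplus_congr (n - 1) hp hq0.ne' (fun y hy => Dpq_psiPQ hq0 hqp n hy) hx, Aplus_const_mul]
    rcases n with _ | m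
    · simp
    rw [Nat.add_sub_cancel, Aplus_psiPQ hq0 hqp m hx, ← mul_assoc,
      Real.mul_self_sqrt (pqNum_succ_pos hq0 hqp m).le]
  have hDpqAplus : Dpq p q (Aplus p q n (psiPQ p q n)) x = pqNum p q (n + 1) * psiPQ p q n x := by
    rw [Dpq_congr hp hq0.ne' (fun y hy => Aplus_psiPQ hq0 hqp n hy) hx, Dpq_const_mul,
      Dpq_psiPQ hq0 hqp (n + 1) hx, Nat.add_sub_cancel, ← mul_assoc,
      Real.mul_self_sqrt (pqNum_succ_pos hq0 hqp n).le]
  refine ⟨hAplusDpq, hDpqAplus, ?_⟩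
  rw [hAplusDpq, hDpqAplus]
  linear_combination psiPQ p q n x * pqNum_succ_sub_mul hqp.ne' n
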